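/- There exist a filtered probability space (Ω,F,F,P), two P-martingales X and Y that are strongly orthogonal under P (i.e. [X,Y] ≡ 0), and a probability measure Q ≪ P such that the Lenglart transformations X̂ and Ŷ are not strongly orthogonal under Q, i.e. [X̂,Ŷ] does not vanish Q-a.s. Concretely: with independent random variables ε (Bernoulli with parameter p ∈ (0,1)) and ξ (uniform on {+1,−1}), X := 1 + εξ 1_{[1,∞)}, Y := 1 + (1−ε)ξ 1_{[1,∞)}, F the natural filtration, and dQ := X_1 dP, one has [X,Y] ≡ 0 under P while ΔY·ΔA^X = −(p/2)(1−ε)ξ 1_{[1]} ≠ 0, where A^X := (ΔX_η 1_{[η,∞)})^{p,P} = −(p/2) 1_{[1,∞)}, so [X̂,Ŷ] ≠ 0. -/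

import Mathlib

open MeasureTheory Filter Set
open scoped NNReal ENNReal Topology Classical

noncomputable section

namespace MartingaleRep

variable {Ω : Type*}

/-- A real-valued path indexed by `ℝ≥0` is càdlàg: right-continuous with left limits. -/
def IsCadlag (f : ℝ≥0 → ℝ) : Prop :=
  (∀ t : ℝ≥0, ContinuousWithinAt f (Set.Ici t) t) ∧
    ∀ t : ℝ≥0, 0 < t → ∃ l : ℝ, Tendsto f (nhdsWithin t (Set.Iio t)) (nhds l)

/-- A path is càdlàg on the (stochastic) interval `[0, T)`. -/
def IsCadlagBefore (f : ℝ≥0 → ℝ) (T : ℝ≥0∞) : Prop :=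
  (∀ t : ℝ≥0, (t : ℝ≥0∞) < T → ContinuousWithinAt f (Set.Ici t) t) ∧
    ∀ t : ℝ≥0, 0 < t → (t : ℝ≥0∞) < T → ∃ l : ℝ, Tendsto f (nhdsWithin t (Set.Iio t)) (nhds l)

/-- The left-limit process `X₋`. -/
def preProc (X : ℝ≥0 → Ω → ℝ) : ℝ≥0 → Ω → ℝ :=
  fun t ω => Function.leftLim (fun s => X s ω) t

/-- The jump process `ΔX`. -/
def jump (X : ℝ≥0 → Ω → ℝ) : ℝ≥0 → Ω → ℝ :=
  fun t ω => X t ω - preProc X t ω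

/-- A path has (locally) bounded variation iff it is a difference of monotone functions. -/
def IsBVPath (A : ℝ≥0 → ℝ) : Prop :=
  ∃ F G : ℝ≥0 → ℝ, Monotone F ∧ Monotone G ∧ ∀ t, A t = F t - G t

/-- The pathwise Lebesgue-Stieltjes integral `I = ∫ H dA` of a function `H` with respect to
a function `A` of (locally) finite variation, expressed through a decomposition of the
Stieltjes measure `dA` as a difference `μ - ν` of two (locally finite) nonnegative measures. -/
def IsPathIntegral (H A I : ℝ≥0 → ℝ) : Prop :=
  ∃ μ ν : Measure ℝ≥0,
    (∀ t : ℝ≥0, μ (Set.Ioc 0 t) < ⊤ ∧ ν (Set.Ioc 0 t) < ⊤) ∧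
      (∀ t : ℝ≥0, A t = A 0 + (μ (Set.Ioc 0 t)).toReal - (ν (Set.Ioc 0 t)).toReal) ∧
      (∀ t : ℝ≥0, IntegrableOn H (Set.Ioc 0 t) μ ∧ IntegrableOn H (Set.Ioc 0 t) ν) ∧
      ∀ t : ℝ≥0, I t = (∫ s in Set.Ioc 0 t, H s ∂μ) - ∫ s in Set.Ioc 0 t, H s ∂ν

variable {m0 : MeasurableSpace Ω}

/-- Right-continuity of a filtration. -/
def RightContinuous (𝒻 : Filtration ℝ≥0 m0) : Prop :=
  ∀ t : ℝ≥0, (𝒻 t : MeasurableSpace Ω) = ⨅ (s : ℝ≥0) (_ : t < s), (𝒻 s : MeasurableSpace Ω)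

/-- Local absolute continuity: `Q ≪ P` on each `𝒻 t`. -/
def LocAbsCont (𝒻 : Filtration ℝ≥0 m0) (P Q : Measure Ω) : Prop :=
  ∀ t : ℝ≥0, Q.trim (𝒻.le t) ≪ P.trim (𝒻.le t)

/-- Local equivalence: `Q ∼ P` on each `𝒻 t`. -/
def LocEquiv (𝒻 : Filtration ℝ≥0 m0) (P Q : Measure Ω) : Prop :=
  LocAbsCont 𝒻 P Q ∧ LocAbsCont 𝒻 Q P

/-- An `[0,∞]`-valued stopping time of the filtration `𝒻`. -/
def IsStoppingTimeE (𝒻 : Filtration ℝ≥0 m0) (τ : Ω → ℝ≥0∞) : Prop :=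
  ∀ t : ℝ≥0, MeasurableSet[𝒻 t] {ω | τ ω ≤ (t : ℝ≥0∞)}

/-- The process `X` stopped at the `[0,∞]`-valued random time `τ`. -/
def stopped (X : ℝ≥0 → Ω → ℝ) (τ : Ω → ℝ≥0∞) : ℝ≥0 → Ω → ℝ :=
  fun t ω => if (t : ℝ≥0∞) ≤ τ ω then X t ω else X (τ ω).toNNReal ω

/-- A (integrable, a.s. càdlàg) martingale. -/
def IsMartingaleC (𝒻 : Filtration ℝ≥0 m0) (μ : Measure Ω) (X : ℝ≥0 → Ω → ℝ) : Prop :=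
  Martingale X 𝒻 μ ∧ (∀ t, Integrable (X t) μ) ∧ ∀ᵐ ω ∂μ, IsCadlag fun t => X t ω

/-- A local martingale: an adapted, a.s. càdlàg process for which there is a localizing
sequence of stopping times increasing a.s. to `∞` making the stopped processes martingales. -/
def IsLocalMartingale (𝒻 : Filtration ℝ≥0 m0) (μ : Measure Ω) (X : ℝ≥0 → Ω → ℝ) : Prop :=
  Adapted 𝒻 X ∧ (∀ᵐ ω ∂μ, IsCadlag fun t => X t ω) ∧
    ∃ τ : ℕ → Ω → ℝ≥0∞,
      (∀ n, IsStoppingTimeE 𝒻 (τ n)) ∧ (∀ n ω, τ n ω ≤ τ (n + 1) ω) ∧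
        (∀ᵐ ω ∂μ, Tendsto (fun n => τ n ω) atTop (nhds (⊤ : ℝ≥0∞))) ∧
        ∀ n, IsMartingaleC 𝒻 μ (stopped X (τ n))

/-- `Z` is the density process of `Q` relative to `P`: a nonnegative càdlàg `P`-martingale
with `dQ|_{𝒻 t} = Z_t dP|_{𝒻 t}` for all `t`. -/
def IsDensityProcess (𝒻 : Filtration ℝ≥0 m0) (P Q : Measure Ω) (Z : ℝ≥0 → Ω → ℝ) : Prop :=
  IsMartingaleC 𝒻 P Z ∧ (∀ t ω, 0 ≤ Z t ω) ∧
    ∀ (t : ℝ≥0) (s : Set Ω), MeasurableSet[𝒻 t] s → (Q s).toReal = ∫ ω in s, Z t ω ∂P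

/-- The stopping time `ζ := inf {t : Z_{t-} = 0 or Z_t = 0}`. -/
def zeta (Z : ℝ≥0 → Ω → ℝ) (ω : Ω) : ℝ≥0∞ :=
  sInf {r : ℝ≥0∞ | ∃ t : ℝ≥0, r = (t : ℝ≥0∞) ∧ (preProc Z t ω = 0 ∨ Z t ω = 0)}

/-- The stopping time `η := ζ` on `{ζ < ∞, Z_{ζ-} > 0}` and `η := ∞` elsewhere. -/
def eta (Z : ℝ≥0 → Ω → ℝ) (ω : Ω) : ℝ≥0∞ :=
  if zeta Z ω < ⊤ ∧ 0 < preProc Z (zeta Z ω).toNNReal ω then zeta Z ω else ⊤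

/-- The single-jump process `ΔX_η 1_{[η,∞)}`. -/
def jumpAtEta (Z X : ℝ≥0 → Ω → ℝ) : ℝ≥0 → Ω → ℝ :=
  fun t ω => if eta Z ω ≤ (t : ℝ≥0∞) then jump X (eta Z ω).toNNReal ω else 0

/-- Dyadic approximating sums for the quadratic covariation `[X,Y]` on `[0,t]`. -/
def dyadicBracketSum (X Y : ℝ≥0 → Ω → ℝ) (t : ℝ≥0) (n : ℕ) (ω : Ω) : ℝ :=
  ∑ k ∈ Finset.range (2 ^ n),
    (X (t * ((k : ℝ≥0) + 1) / 2 ^ n) ω - X (t * (k : ℝ≥0) / 2 ^ n) ω) *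
      (Y (t * ((k : ℝ≥0) + 1) / 2 ^ n) ω - Y (t * (k : ℝ≥0) / 2 ^ n) ω)

/-- `C` is (a version of) the quadratic covariation `[X,Y]`: an adapted, a.s. càdlàg process,
null at `0`, which is for every `t` the limit in `μ`-probability of the dyadic Riemann sums. -/
def IsQuadCovar (𝒻 : Filtration ℝ≥0 m0) (μ : Measure Ω) (X Y C : ℝ≥0 → Ω → ℝ) : Prop :=
  Adapted 𝒻 C ∧ (∀ᵐ ω ∂μ, IsCadlag fun t => C t ω) ∧ (∀ᵐ ω ∂μ, C 0 ω = 0) ∧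
    ∀ t : ℝ≥0, TendstoInMeasure μ (fun n => dyadicBracketSum X Y t n) atTop (C t)

/-- `I = H ⬝ A` is the process of pathwise Lebesgue-Stieltjes integrals of `H` against the
finite-variation process `A` (a.s. under `μ`), chosen adapted. -/
def IsIntegralProc (𝒻 : Filtration ℝ≥0 m0) (μ : Measure Ω) (H A I : ℝ≥0 → Ω → ℝ) : Prop :=
  Adapted 𝒻 I ∧
    ∀ᵐ ω ∂μ, IsPathIntegral (fun s => H s ω) (fun s => A s ω) (fun s => I s ω)

/-- The predictable σ-algebra on `ℝ≥0 × Ω` associated with the filtration `𝒻`. -/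
def predSigma (𝒻 : Filtration ℝ≥0 m0) : MeasurableSpace (ℝ≥0 × Ω) :=
  MeasurableSpace.generateFrom
    ({p : Set (ℝ≥0 × Ω) |
        ∃ (s t : ℝ≥0) (A : Set Ω), MeasurableSet[𝒻 s] A ∧ p = Set.Ioc s t ×ˢ A} ∪
      {p : Set (ℝ≥0 × Ω) | ∃ A : Set Ω, MeasurableSet[𝒻 0] A ∧ p = ({0} : Set ℝ≥0) ×ˢ A})

/-- A predictable process. -/
def IsPredictableProc (𝒻 : Filtration ℝ≥0 m0) (H : ℝ≥0 → Ω → ℝ) : Prop :=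
  Measurable[predSigma 𝒻] fun p : ℝ≥0 × Ω => H p.1 p.2

/-- `Ap` is the dual predictable projection (compensator) of the finite-variation process `A`
under `μ`: a predictable finite-variation process, null at `0`, such that `A - Ap` is a
`μ`-local martingale. -/
def IsCompensator (𝒻 : Filtration ℝ≥0 m0) (μ : Measure Ω) (A Ap : ℝ≥0 → Ω → ℝ) : Prop :=
  IsPredictableProc 𝒻 Ap ∧ (∀ ω, Ap 0 ω = 0) ∧
    (∀ᵐ ω ∂μ, IsBVPath fun t => Ap t ω) ∧ (∀ᵐ ω ∂μ, IsCadlag fun t => Ap t ω) ∧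
    IsLocalMartingale 𝒻 μ fun t ω => A t ω - Ap t ω

/-- `Xh` is the Lenglart transformation `X̂ = X - (1/Z)⬝[X,Z] + (ΔX_η 1_{[η,∞)})^{p,P}`
of the `P`-local martingale `X`. -/
def IsLenglartTransform (𝒻 : Filtration ℝ≥0 m0) (P Q : Measure Ω)
    (Z X Xh : ℝ≥0 → Ω → ℝ) : Prop :=
  ∃ C A B : ℝ≥0 → Ω → ℝ,
    IsQuadCovar 𝒻 P X Z C ∧
      IsIntegralProc 𝒻 Q (fun t ω => (Z t ω)⁻¹) C A ∧
      IsCompensator 𝒻 P (jumpAtEta Z X) B ∧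
      ∀ t ω, Xh t ω = X t ω - A t ω + B t ω

/-- `Xh` is the Girsanov-Lenglart transformation `X̂ = X - (1/Z)⬝[X,Z]` of `X` (the form the
Lenglart transformation takes when the extra compensator term vanishes, e.g. under local
equivalence or for continuous `X`). -/
def IsGirsanovTransform (𝒻 : Filtration ℝ≥0 m0) (P Q : Measure Ω)
    (Z X Xh : ℝ≥0 → Ω → ℝ) : Prop :=
  ∃ C A : ℝ≥0 → Ω → ℝ,
    IsQuadCovar 𝒻 P X Z C ∧
      IsIntegralProc 𝒻 Q (fun t ω => (Z t ω)⁻¹) C A ∧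
      ∀ t ω, Xh t ω = X t ω - A t ω

/-- A uniformly bounded (càdlàg) martingale. -/
def BoundedMartingale (𝒻 : Filtration ℝ≥0 m0) (μ : Measure Ω) (N : ℝ≥0 → Ω → ℝ) : Prop :=
  IsMartingaleC 𝒻 μ N ∧ ∃ c : ℝ, ∀ t ω, |N t ω| ≤ c

/-- `I = H ⬝ X` is the stochastic integral, in the sense of local martingales, of the
(real-valued) predictable process `H` with respect to the local martingale `X`:
`I` is a local martingale null at `0` such that for every bounded martingale `N`,
`[I,N] - H ⬝ [X,N]` is a local martingale. -/
def IsMartStochIntR (𝒻 : Filtration ℝ≥0 m0) (μ : Measure Ω) (H X I : ℝ≥0 → Ω → ℝ) : Prop :=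
  IsPredictableProc 𝒻 H ∧ IsLocalMartingale 𝒻 μ I ∧ (∀ ω, I 0 ω = 0) ∧
    ∀ N : ℝ≥0 → Ω → ℝ, BoundedMartingale 𝒻 μ N →
      ∀ CIN CXN J : ℝ≥0 → Ω → ℝ, IsQuadCovar 𝒻 μ I N CIN → IsQuadCovar 𝒻 μ X N CXN →
        IsIntegralProc 𝒻 μ H CXN J →
        IsLocalMartingale 𝒻 μ fun t ω => CIN t ω - J t ω

/-- `I = H ⬝ X` is the (vector) stochastic integral, in the sense of local martingales, of the
`ℝ^d`-valued predictable process `H` with respect to the `ℝ^d`-valued local martingale `X`. -/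
def IsMartStochInt (𝒻 : Filtration ℝ≥0 m0) (μ : Measure Ω) {d : ℕ}
    (H X : ℝ≥0 → Ω → Fin d → ℝ) (I : ℝ≥0 → Ω → ℝ) : Prop :=
  (∀ i, IsPredictableProc 𝒻 fun t ω => H t ω i) ∧ IsLocalMartingale 𝒻 μ I ∧
    (∀ ω, I 0 ω = 0) ∧
    ∀ N : ℝ≥0 → Ω → ℝ, BoundedMartingale 𝒻 μ N →
      ∀ (CIN : ℝ≥0 → Ω → ℝ) (CXN J : Fin d → ℝ≥0 → Ω → ℝ),
        IsQuadCovar 𝒻 μ I N CIN →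
        (∀ i, IsQuadCovar 𝒻 μ (fun t ω => X t ω i) N (CXN i)) →
        (∀ i, IsIntegralProc 𝒻 μ (fun t ω => H t ω i) (CXN i) (J i)) →
        IsLocalMartingale 𝒻 μ fun t ω => CIN t ω - ∑ i, J i t ω

/-- The martingale representation property of an `ℝ^d`-valued local martingale `X` under `μ`:
every `μ`-local martingale null at `0` is a stochastic integral with respect to `X`. -/
def HasMRP (𝒻 : Filtration ℝ≥0 m0) (μ : Measure Ω) {d : ℕ}
    (X : ℝ≥0 → Ω → Fin d → ℝ) : Prop :=
  ∀ N : ℝ≥0 → Ω → ℝ, IsLocalMartingale 𝒻 μ N → (∀ᵐ ω ∂μ, N 0 ω = 0) →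
    ∃ (H : ℝ≥0 → Ω → Fin d → ℝ) (I : ℝ≥0 → Ω → ℝ),
      IsMartStochInt 𝒻 μ H X I ∧ ∀ᵐ ω ∂μ, ∀ t, N t ω = I t ω

/-- The martingale representation property of a real-valued local martingale. -/
def HasMRPR (𝒻 : Filtration ℝ≥0 m0) (μ : Measure Ω) (X : ℝ≥0 → Ω → ℝ) : Prop :=
  ∀ N : ℝ≥0 → Ω → ℝ, IsLocalMartingale 𝒻 μ N → (∀ᵐ ω ∂μ, N 0 ω = 0) →
    ∃ H I : ℝ≥0 → Ω → ℝ,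
      IsMartStochIntR 𝒻 μ H X I ∧ ∀ᵐ ω ∂μ, ∀ t, N t ω = I t ω

/-- The `H¹`-norm `E[sup_t |M_t|]`. -/
def hOneNorm (μ : Measure Ω) (M : ℝ≥0 → Ω → ℝ) : ℝ≥0∞ :=
  ∫⁻ ω, ⨆ t : ℝ≥0, ENNReal.ofReal |M t ω| ∂μ

/-- Membership in `H¹(μ)`. -/
def MemHOne (𝒻 : Filtration ℝ≥0 m0) (μ : Measure Ω) (M : ℝ≥0 → Ω → ℝ) : Prop :=
  IsMartingaleC 𝒻 μ M ∧ hOneNorm μ M < ⊤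

/-- Membership in `H¹₀(μ)`, the `H¹`-martingales starting from `0`. -/
def MemHOneZero (𝒻 : Filtration ℝ≥0 m0) (μ : Measure Ω) (M : ℝ≥0 → Ω → ℝ) : Prop :=
  MemHOne 𝒻 μ M ∧ ∀ᵐ ω ∂μ, M 0 ω = 0

/-- A stable subspace of `H¹₀(μ)`: a linear subspace, closed in the `H¹`-norm, and stable
under stopping. -/
def IsStableSubspace (𝒻 : Filtration ℝ≥0 m0) (μ : Measure Ω)
    (S : Set (ℝ≥0 → Ω → ℝ)) : Prop :=
  (∀ M ∈ S, MemHOneZero 𝒻 μ M) ∧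
    (∀ M ∈ S, ∀ τ : Ω → ℝ≥0∞, IsStoppingTimeE 𝒻 τ → stopped M τ ∈ S) ∧
    (∀ M ∈ S, ∀ N ∈ S, (fun t ω => M t ω + N t ω) ∈ S) ∧
    (∀ c : ℝ, ∀ M ∈ S, (fun t ω => c * M t ω) ∈ S) ∧
    ∀ (M : ℝ≥0 → Ω → ℝ) (Ms : ℕ → ℝ≥0 → Ω → ℝ), (∀ n, Ms n ∈ S) → MemHOne 𝒻 μ M →
      Tendsto (fun n => hOneNorm μ fun t ω => M t ω - Ms n t ω) atTop (nhds 0) → M ∈ S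

/-- The stable subspace `𝓛¹(𝒴, μ)` of `H¹(μ)` generated by a family `𝒴` of local
martingales: the smallest stable subspace containing all stochastic integrals `H ⬝ Y`,
`Y ∈ 𝒴`, lying in `H¹(μ)`. -/
def stableSpanR (𝒻 : Filtration ℝ≥0 m0) (μ : Measure Ω)
    (Y : Set (ℝ≥0 → Ω → ℝ)) : Set (ℝ≥0 → Ω → ℝ) :=
  ⋂₀ {S | IsStableSubspace 𝒻 μ S ∧
    ∀ M ∈ Y, ∀ H I : ℝ≥0 → Ω → ℝ, IsMartStochIntR 𝒻 μ H M I → MemHOne 𝒻 μ I → I ∈ S}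

/-- The stable subspace `𝓛¹(X, μ)` of `H¹(μ)` generated by an `ℝ^d`-valued local
martingale `X` (via vector stochastic integrals). -/
def stableSpanVec (𝒻 : Filtration ℝ≥0 m0) (μ : Measure Ω) {d : ℕ}
    (X : ℝ≥0 → Ω → Fin d → ℝ) : Set (ℝ≥0 → Ω → ℝ) :=
  ⋂₀ {S | IsStableSubspace 𝒻 μ S ∧
    ∀ (H : ℝ≥0 → Ω → Fin d → ℝ) (I : ℝ≥0 → Ω → ℝ),
      IsMartStochInt 𝒻 μ H X I → MemHOne 𝒻 μ I → I ∈ S}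

/-- The set of Lenglart transformations of all `P`-martingales. -/
def hatMartingales (𝒻 : Filtration ℝ≥0 m0) (P Q : Measure Ω) (Z : ℝ≥0 → Ω → ℝ) :
    Set (ℝ≥0 → Ω → ℝ) :=
  {Xh | ∃ X : ℝ≥0 → Ω → ℝ, IsMartingaleC 𝒻 P X ∧ IsLenglartTransform 𝒻 P Q Z X Xh}

/-- An `ℝ^d`-valued local martingale `X` spans `H¹₀(μ)` if the stable subspace it generates
is all of `H¹₀(μ)`. -/
def SpansHOne (𝒻 : Filtration ℝ≥0 m0) (μ : Measure Ω) {d : ℕ}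
    (X : ℝ≥0 → Ω → Fin d → ℝ) : Prop :=
  (∀ i, IsLocalMartingale 𝒻 μ fun t ω => X t ω i) ∧
    stableSpanVec 𝒻 μ X = {M | MemHOneZero 𝒻 μ M}

/-- The dimension of `H¹(μ)`: the least `d` such that some `ℝ^d`-valued local martingale
generates `H¹₀(μ)` (`∞` if there is no finite-dimensional generator). -/
def hOneDim (𝒻 : Filtration ℝ≥0 m0) (μ : Measure Ω) : ℕ∞ :=
  sInf {n : ℕ∞ | ∃ (d : ℕ) (X : ℝ≥0 → Ω → Fin d → ℝ), (d : ℕ∞) = n ∧ SpansHOne 𝒻 μ X}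

/-- A basis of `H¹(μ)`: an `ℝ^d`-valued local martingale generating `H¹₀(μ)` with `d`
minimal. -/
def IsBasisHOne (𝒻 : Filtration ℝ≥0 m0) (μ : Measure Ω) {d : ℕ}
    (X : ℝ≥0 → Ω → Fin d → ℝ) : Prop :=
  SpansHOne 𝒻 μ X ∧ (d : ℕ∞) = hOneDim 𝒻 μ

/-- A predictable (announced) stopping time. -/
def IsAnnouncedTime (𝒻 : Filtration ℝ≥0 m0) (τ : Ω → ℝ≥0∞) : Prop :=
  IsStoppingTimeE 𝒻 τ ∧
    ∃ σ : ℕ → Ω → ℝ≥0∞,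
      (∀ n, IsStoppingTimeE 𝒻 (σ n)) ∧ (∀ n ω, σ n ω ≤ σ (n + 1) ω) ∧
        (∀ ω, Tendsto (fun n => σ n ω) atTop (nhds (τ ω))) ∧
        ∀ n ω, 0 < τ ω → σ n ω < τ ω

/-- An accessible stopping time: its graph is a.s. covered by graphs of predictable times. -/
def IsAccessibleTime (𝒻 : Filtration ℝ≥0 m0) (μ : Measure Ω) (τ : Ω → ℝ≥0∞) : Prop :=
  IsStoppingTimeE 𝒻 τ ∧
    ∃ σ : ℕ → Ω → ℝ≥0∞, (∀ n, IsAnnouncedTime 𝒻 (σ n)) ∧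
      ∀ᵐ ω ∂μ, τ ω < ⊤ → ∃ n, τ ω = σ n ω

/-- A totally inaccessible stopping time: it a.s. avoids every predictable time. -/
def IsTotallyInaccessibleTime (𝒻 : Filtration ℝ≥0 m0) (μ : Measure Ω)
    (τ : Ω → ℝ≥0∞) : Prop :=
  IsStoppingTimeE 𝒻 τ ∧
    ∀ σ : Ω → ℝ≥0∞, IsAnnouncedTime 𝒻 σ → μ {ω | τ ω = σ ω ∧ τ ω < ⊤} = 0

/-- A purely discontinuous local martingale: a local martingale orthogonal (in the usual
sense) to every continuous local martingale null at `0`. -/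
def IsPurelyDiscontinuous (𝒻 : Filtration ℝ≥0 m0) (μ : Measure Ω)
    (M : ℝ≥0 → Ω → ℝ) : Prop :=
  IsLocalMartingale 𝒻 μ M ∧
    ∀ N : ℝ≥0 → Ω → ℝ, IsLocalMartingale 𝒻 μ N → (∀ᵐ ω ∂μ, Continuous fun t => N t ω) →
      (∀ᵐ ω ∂μ, N 0 ω = 0) → IsLocalMartingale 𝒻 μ fun t ω => M t ω * N t ω

/-- A semimartingale: an adapted càdlàg process decomposable as the sum of a local
martingale and an adapted process of (locally) finite variation. -/
def IsSemimartingale (𝒻 : Filtration ℝ≥0 m0) (μ : Measure Ω) (X : ℝ≥0 → Ω → ℝ) : Prop :=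
  Adapted 𝒻 X ∧ (∀ᵐ ω ∂μ, IsCadlag fun t => X t ω) ∧
    ∃ M A : ℝ≥0 → Ω → ℝ, IsLocalMartingale 𝒻 μ M ∧ Adapted 𝒻 A ∧
      (∀ᵐ ω ∂μ, IsBVPath fun t => A t ω) ∧ (∀ᵐ ω ∂μ, IsCadlag fun t => A t ω) ∧
      ∀ᵐ ω ∂μ, ∀ t, X t ω = M t ω + A t ω

/-- Left-point dyadic Riemann sums for the stochastic integral `∫ H dX`. -/
def dyadicRiemannSum (H X : ℝ≥0 → Ω → ℝ) (t : ℝ≥0) (n : ℕ) (ω : Ω) : ℝ :=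
  ∑ k ∈ Finset.range (2 ^ n),
    H (t * (k : ℝ≥0) / 2 ^ n) ω *
      (X (t * ((k : ℝ≥0) + 1) / 2 ^ n) ω - X (t * (k : ℝ≥0) / 2 ^ n) ω)

/-- `I = H₋ ⬝ X` as limit in probability of left-point Riemann sums (for a càdlàg adapted
integrand `H`, this is the stochastic integral of the left limit process `H₋`). -/
def IsRiemannStochInt (μ : Measure Ω) (H X I : ℝ≥0 → Ω → ℝ) : Prop :=
  ∀ t : ℝ≥0, TendstoInMeasure μ (fun n => dyadicRiemannSum H X t n) atTop (I t)


section OrthoEx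

abbrev Ω2 := Bool × Bool

lemma measSet (s : Set Ω2) : MeasurableSet s := s.to_countable.measurableSet
lemma measB (s : Set Bool) : MeasurableSet s := s.to_countable.measurableSet
lemma measFun {β} [MeasurableSpace β] (f : Ω2 → β) : Measurable f :=
  fun _ _ => measSet _

def eF (ω : Ω2) : ℝ := if ω.1 then 1 else 0
def xF (ω : Ω2) : ℝ := if ω.2 then 1 else -1

def μB : Measure Bool := (2 : ℝ≥0∞)⁻¹ • (Measure.dirac true + Measure.dirac false)

lemma μB_apply (s : Set Bool) :
    μB s = 2⁻¹ * (s.indicator 1 true + s.indicator 1 false) := by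
  simp [μB, Measure.smul_apply, Measure.add_apply,
    Measure.dirac_apply' _ (measB s), smul_eq_mul, mul_add]

instance : IsProbabilityMeasure μB := by
  constructor
  rw [μB_apply]
  simp [Set.indicator_of_mem]
  rw [one_add_one_eq_two, ENNReal.inv_mul_cancel (by norm_num) (by norm_num)]

def Pm : Measure Ω2 := μB.prod μB

instance : IsProbabilityMeasure Pm := by
  unfold Pm; infer_instance

lemma Pm_prod (s t : Set Bool) : Pm (s ×ˢ t) = μB s * μB t :=
  Measure.prod_prod s t

lemma μB_singleton (b : Bool) : μB {b} = 2⁻¹ := by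
  rw [μB_apply]; cases b <;> simp

lemma Pm_singleton (ω : Ω2) : Pm {ω} = 4⁻¹ := by
  rcases ω with ⟨a, b⟩
  rw [← Set.singleton_prod_singleton, Pm_prod, μB_singleton, μB_singleton]
  rw [← ENNReal.mul_inv (by norm_num) (by norm_num)]
  norm_num

lemma Pm_integral (f : Ω2 → ℝ) :
    ∫ ω, f ω ∂Pm
      = 4⁻¹ * (f (true, true) + f (true, false) + f (false, true) + f (false, false)) := by
  rw [integral_fintype (Integrable.of_finite)]
  rw [Fintype.sum_prod_type]
  simp only [Fintype.sum_bool, Measure.real, Pm_singleton]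
  simp only [smul_eq_mul, ENNReal.toReal_inv]
  norm_num
  ring


def Filt : Filtration ℝ≥0 (inferInstance : MeasurableSpace Ω2) where
  seq t := if (1:ℝ≥0) ≤ t then (inferInstance : MeasurableSpace Ω2) else ⊥
  mono' := by
    intro s t hst
    dsimp only
    split_ifs with h1 h2
    · exact le_rfl
    · exact absurd (h1.trans hst) h2
    · exact bot_le
    · exact le_rfl
  le' := by
    intro t; split_ifs
    · exact le_rfl
    · exact bot_le

lemma Filt_ge {t : ℝ≥0} (h : (1:ℝ≥0) ≤ t) :
    (Filt t : MeasurableSpace Ω2) = (inferInstance : MeasurableSpace Ω2) := if_pos h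

lemma Filt_lt {t : ℝ≥0} (h : t < 1) : (Filt t : MeasurableSpace Ω2) = ⊥ :=
  if_neg (not_le.2 h)

lemma Filt_rightContinuous : RightContinuous Filt := by
  intro t
  by_cases h : (1:ℝ≥0) ≤ t
  · apply le_antisymm
    · rw [Filt_ge h]
      refine le_iInf fun s => le_iInf fun hs => ?_
      rw [Filt_ge (h.trans hs.le)]
    · refine (iInf_le_of_le (t + 1) (iInf_le_of_le (lt_add_of_pos_right t one_pos) ?_))
      rw [Filt_ge h, Filt_ge (h.trans (le_add_of_nonneg_right zero_le'))]
  · push_neg at h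
    apply le_antisymm
    · rw [Filt_lt h]; exact bot_le
    · have h' := h
      rw [← NNReal.coe_lt_coe] at h'
      push_cast at h'
      have h1 : t < (t + 1) / 2 := by
        rw [← NNReal.coe_lt_coe]
        push_cast
        linarith
      have h2 : (t + 1) / 2 < 1 := by
        rw [← NNReal.coe_lt_coe]
        push_cast
        linarith
      refine iInf_le_of_le ((t + 1) / 2) (iInf_le_of_le h1 ?_)
      rw [Filt_lt h2, Filt_lt h]

/-- the basic single-jump step process -/
def step (k : ℝ) (a : Ω2 → ℝ) : ℝ≥0 → Ω2 → ℝ :=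
  fun t ω => k + if (1:ℝ≥0) ≤ t then a ω else 0

lemma step_adapted (k : ℝ) (a : Ω2 → ℝ) : Adapted Filt (step k a) := by
  intro t
  by_cases h : (1:ℝ≥0) ≤ t
  · rw [Filt_ge h]
    exact measFun _
  · have he : step k a t = fun _ => k := by
      funext ω; simp [step, h]
    rw [he, Filt_lt (not_le.1 h)]
    exact measurable_const

lemma isCadlag_ite (c d : ℝ) : IsCadlag (fun t : ℝ≥0 => if (1:ℝ≥0) ≤ t then c else d) := by
  constructor
  · intro t
    by_cases h : (1:ℝ≥0) ≤ t
    · refine (continuousWithinAt_const (b := c)).congr (fun s hs => ?_) (by simp [h])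
      simp [h.trans hs]
    · refine ContinuousWithinAt.congr_of_eventuallyEq
        (continuousWithinAt_const (b := d)) ?_ (by simp [h])
      filter_upwards [mem_nhdsWithin_of_mem_nhds (Iio_mem_nhds (not_le.1 h))] with s hs
      simp [not_le.2 (mem_Iio.1 hs)]
  · intro t ht
    by_cases h : (1:ℝ≥0) < t
    · refine ⟨c, ?_⟩
      have : Set.Ioi (1:ℝ≥0) ∈ 𝓝[<] t := mem_nhdsWithin_of_mem_nhds (Ioi_mem_nhds h)
      refine Tendsto.congr' ?_ (tendsto_const_nhds (α := ℝ≥0))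
      filter_upwards [this] with s hs
      simp [le_of_lt (mem_Ioi.1 hs)]
    · refine ⟨d, ?_⟩
      refine Tendsto.congr' ?_ (tendsto_const_nhds (α := ℝ≥0))
      filter_upwards [self_mem_nhdsWithin] with s hs
      have : ¬ (1:ℝ≥0) ≤ s := not_le.2 (lt_of_lt_of_le hs (not_lt.1 h))
      simp [this]

lemma step_path (k : ℝ) (a : Ω2 → ℝ) (ω : Ω2) :
    (fun t => step k a t ω) = fun t : ℝ≥0 => if (1:ℝ≥0) ≤ t then k + a ω else k := by
  funext t; by_cases h : (1:ℝ≥0) ≤ t <;> simp [step, h]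

lemma step_cadlag (k : ℝ) (a : Ω2 → ℝ) (ω : Ω2) : IsCadlag (fun t => step k a t ω) := by
  rw [step_path]; exact isCadlag_ite _ _

lemma step_integral (k : ℝ) (a : Ω2 → ℝ) (t : ℝ≥0) :
    ∫ ω, step k a t ω ∂Pm = k + if (1:ℝ≥0) ≤ t then ∫ ω, a ω ∂Pm else 0 := by
  by_cases h : (1:ℝ≥0) ≤ t
  · simp only [step, h, if_true]
    rw [integral_add (integrable_const k) Integrable.of_finite, integral_const]
    simp
  · simp only [step, h, if_false]
    rw [integral_const]
    simp

lemma step_mart (k : ℝ) (a : Ω2 → ℝ) (ha : ∫ ω, a ω ∂Pm = 0) :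
    Martingale (step k a) Filt Pm := by
  refine ⟨(step_adapted k a).stronglyAdapted, fun i j hij => ?_⟩
  by_cases hi : (1:ℝ≥0) ≤ i
  · have hj : (1:ℝ≥0) ≤ j := hi.trans hij
    have hsm : StronglyMeasurable[Filt i] (step k a j) := by
      rw [Filt_ge hi]; exact (measFun _).stronglyMeasurable
    rw [condExp_of_stronglyMeasurable (Filt.le i) hsm Integrable.of_finite]
    refine Eventually.of_forall fun ω => ?_
    simp [step, hi, hj]
  · have h𝒻 : (Filt i : MeasurableSpace Ω2) = ⊥ := Filt_lt (not_le.1 hi)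
    rw [h𝒻, condExp_bot]
    refine Eventually.of_forall fun ω => ?_
    rw [step_integral k a j, ha]
    simp [step, hi]

lemma step_martC (k : ℝ) (a : Ω2 → ℝ) (ha : ∫ ω, a ω ∂Pm = 0) :
    IsMartingaleC Filt Pm (step k a) :=
  ⟨step_mart k a ha, fun _ => Integrable.of_finite, ae_of_all _ fun ω => step_cadlag k a ω⟩

lemma stopped_top (M : ℝ≥0 → Ω2 → ℝ) : stopped M (fun _ => (⊤ : ℝ≥0∞)) = M := by
  funext t ω; simp [stopped]

lemma martC_local {μ : Measure Ω2} {M : ℝ≥0 → Ω2 → ℝ} (h : IsMartingaleC Filt μ M) :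
    IsLocalMartingale Filt μ M := by
  refine ⟨h.1.stronglyAdapted.adapted, h.2.2, fun _ _ => (⊤ : ℝ≥0∞), fun n t => ?_, fun n ω => le_rfl, ?_, ?_⟩
  · have : {ω : Ω2 | (⊤ : ℝ≥0∞) ≤ (t : ℝ≥0∞)} = ∅ := by
      ext ω; simp [top_le_iff, (ENNReal.coe_ne_top : (t:ℝ≥0∞) ≠ ⊤)]
    rw [this]
    exact @MeasurableSet.empty _ (Filt t)
  · exact ae_of_all _ fun ω => tendsto_const_nhds
  · intro n; rw [stopped_top]; exact h

lemma leftLim_ite (c d : ℝ) (t : ℝ≥0) :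
    Function.leftLim (fun s : ℝ≥0 => if (1:ℝ≥0) ≤ s then c else d) t
      = if (1:ℝ≥0) < t then c else d := by
  rcases eq_or_lt_of_le (zero_le : (0:ℝ≥0) ≤ t) with h0 | h0
  · have hbot : (𝓝[<] t) = ⊥ := by
      rw [← h0]
      have : Set.Iio (0:ℝ≥0) = ∅ := by ext s; simp
      rw [nhdsWithin, this]
      simp
    rw [leftLim_eq_of_eq_bot _ hbot, ← h0]
    norm_num
  · have hnb : (𝓝[<] t).NeBot := nhdsWithin_Iio_self_neBot' ⟨0, h0⟩
    apply leftLim_eq_of_tendsto (h := hnb)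
    by_cases h : (1:ℝ≥0) < t
    · rw [if_pos h]
      refine Tendsto.congr' ?_ (tendsto_const_nhds (α := ℝ≥0))
      filter_upwards [mem_nhdsWithin_of_mem_nhds (Ioi_mem_nhds h)] with s hs
      simp [le_of_lt (mem_Ioi.1 hs)]
    · rw [if_neg h]
      refine Tendsto.congr' ?_ (tendsto_const_nhds (α := ℝ≥0))
      filter_upwards [self_mem_nhdsWithin] with s hs
      simp [not_le.2 (lt_of_lt_of_le (mem_Iio.1 hs) (not_lt.1 h))]

lemma preProc_step (k : ℝ) (a : Ω2 → ℝ) (t : ℝ≥0) (ω : Ω2) :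
    preProc (step k a) t ω = k + if (1:ℝ≥0) < t then a ω else 0 := by
  unfold preProc
  rw [step_path, leftLim_ite]
  by_cases h : (1:ℝ≥0) < t <;> simp [h]

lemma jump_step (k : ℝ) (a : Ω2 → ℝ) (t : ℝ≥0) (ω : Ω2) :
    jump (step k a) t ω = if t = 1 then a ω else 0 := by
  unfold jump
  rw [preProc_step]
  simp only [step]
  rcases lt_trichotomy t 1 with h | h | h
  · simp [not_le.2 h, not_lt.2 h.le, h.ne]
  · simp [h]
  · simp [h.le, h, h.ne']

lemma tendstoInMeasure_of_eq {μ : Measure Ω2} {f : ℕ → Ω2 → ℝ} {g : Ω2 → ℝ}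
    (h : ∀ n ω, f n ω = g ω) : TendstoInMeasure μ f atTop g := by
  intro ε hε
  have hz : ∀ n : ℕ, μ {x | ε ≤ edist (f n x) (g x)} = 0 := by
    intro n
    have : {x | ε ≤ edist (f n x) (g x)} = ∅ := by
      ext x; simp [h n x, edist_self, not_le.2 hε]
    rw [this, measure_empty]
  simp only [hz]
  exact tendsto_const_nhds

def cc (s : ℝ≥0) : ℝ := if (1:ℝ≥0) ≤ s then 1 else 0

lemma dyadic_eq (k k' : ℝ) (a b : Ω2 → ℝ) (t : ℝ≥0) (n : ℕ) (ω : Ω2) :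
    dyadicBracketSum (step k a) (step k' b) t n ω = a ω * b ω * cc t := by
  set u : ℕ → ℝ≥0 := fun j => t * (j : ℝ≥0) / 2 ^ n with hu
  have hstep : ∀ (c0 : ℝ) (f : Ω2 → ℝ) (s s' : ℝ≥0),
      step c0 f s ω - step c0 f s' ω = f ω * (cc s - cc s') := by
    intro c0 f s s'
    simp only [step, cc]
    split_ifs <;> ring
  have humono : ∀ j : ℕ, u j ≤ u (j + 1) := by
    intro j
    show t * ((j : ℕ) : ℝ≥0) / 2 ^ n ≤ t * ((j + 1 : ℕ) : ℝ≥0) / 2 ^ n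
    gcongr
    exact_mod_cast Nat.le_succ j
  have hsq : ∀ j : ℕ, (cc (u (j+1)) - cc (u j)) * (cc (u (j+1)) - cc (u j))
      = cc (u (j+1)) - cc (u j) := by
    intro j
    by_cases h0 : (1:ℝ≥0) ≤ u j
    · simp [cc, h0, h0.trans (humono j)]
    · by_cases h1 : (1:ℝ≥0) ≤ u (j+1) <;> simp [cc, h0, h1]
  have hcast : ∀ j : ℕ, t * ((j : ℝ≥0) + 1) / 2 ^ n = u (j + 1) := by
    intro j
    rw [hu]
    push_cast
    ring_nf
  have hterm : ∀ j ∈ Finset.range (2 ^ n),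
      (step k a (t * ((j:ℝ≥0) + 1) / 2 ^ n) ω - step k a (t * (j:ℝ≥0) / 2 ^ n) ω) *
        (step k' b (t * ((j:ℝ≥0) + 1) / 2 ^ n) ω - step k' b (t * (j:ℝ≥0) / 2 ^ n) ω)
      = a ω * b ω * (cc (u (j+1)) - cc (u j)) := by
    intro j _
    rw [hcast j]
    have h1 : t * (j:ℝ≥0) / 2 ^ n = u j := rfl
    rw [h1, hstep, hstep]
    calc a ω * (cc (u (j+1)) - cc (u j)) * (b ω * (cc (u (j+1)) - cc (u j)))
        = a ω * b ω * ((cc (u (j+1)) - cc (u j)) * (cc (u (j+1)) - cc (u j))) := by ring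
      _ = a ω * b ω * (cc (u (j+1)) - cc (u j)) := by rw [hsq j]
  unfold dyadicBracketSum
  rw [Finset.sum_congr rfl hterm, ← Finset.mul_sum, Finset.sum_range_sub (fun j => cc (u j))]
  have hu0 : u 0 = 0 := by simp [hu]
  have hu2 : u (2 ^ n) = t := by
    rw [hu]
    push_cast
    rw [mul_div_assoc, div_self (by positivity), mul_one]
  rw [hu0, hu2]
  have : cc 0 = 0 := by norm_num [cc]
  rw [this, sub_zero]

/-- coefficient functions -/
def aX (ω : Ω2) : ℝ := eF ω * xF ω
def aY (ω : Ω2) : ℝ := (1 - eF ω) * xF ω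
def qX (ω : Ω2) : ℝ := aX ω * aX ω
def gX (ω : Ω2) : ℝ := aX ω - qX ω * (1 + aX ω)⁻¹ - 1/4

lemma aX_mul_aY (ω : Ω2) : aX ω * aY ω = 0 := by
  rcases ω with ⟨a, b⟩
  cases a <;> cases b <;> norm_num [aX, aY, eF, xF]

lemma aX_int : ∫ ω, aX ω ∂Pm = 0 := by
  rw [Pm_integral]
  norm_num [aX, eF, xF]

lemma aY_int : ∫ ω, aY ω ∂Pm = 0 := by
  rw [Pm_integral]
  norm_num [aY, eF, xF]

def bad : Ω2 := (true, false)

lemma aX_bad : aX bad = -1 := by norm_num [aX, eF, xF, bad]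

lemma aX_nonneg_of_ne {ω : Ω2} (h : ω ≠ bad) : 0 ≤ aX ω := by
  rcases ω with ⟨a, b⟩
  cases a <;> cases b <;> simp_all [aX, eF, xF, bad]

lemma zeta_eq (ω : Ω2) : zeta (step 1 aX) ω = if ω = bad then 1 else ⊤ := by
  by_cases hb : ω = bad
  · subst hb
    rw [if_pos rfl]
    apply le_antisymm
    · apply sInf_le
      exact ⟨1, rfl, Or.inr (by simp [step, aX_bad])⟩
    · apply le_sInf
      rintro r ⟨t, rfl, h⟩
      have h1t : (1:ℝ≥0) ≤ t := by
        rcases h with h | h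
        · rw [preProc_step] at h
          by_cases hlt : (1:ℝ≥0) < t
          · exact hlt.le
          · rw [if_neg hlt, add_zero] at h; norm_num at h
        · simp only [step] at h
          by_cases hle : (1:ℝ≥0) ≤ t
          · exact hle
          · rw [if_neg hle, add_zero] at h; norm_num at h
      exact_mod_cast h1t
  · rw [if_neg hb]
    have hempty : {r : ℝ≥0∞ | ∃ t : ℝ≥0, r = (t : ℝ≥0∞) ∧
        (preProc (step 1 aX) t ω = 0 ∨ step 1 aX t ω = 0)} = ∅ := by
      ext r
      simp only [Set.mem_setOf_eq, Set.mem_empty_iff_false, iff_false, not_exists]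
      rintro t ⟨rfl, h⟩
      have hax := aX_nonneg_of_ne hb
      rcases h with h | h
      · rw [preProc_step] at h
        split_ifs at h <;> linarith
      · simp only [step] at h
        split_ifs at h <;> linarith
    unfold zeta
    rw [hempty, sInf_empty]

lemma eta_eq (ω : Ω2) : eta (step 1 aX) ω = if ω = bad then 1 else ⊤ := by
  unfold eta
  rw [zeta_eq]
  by_cases hb : ω = bad
  · rw [if_pos hb]
    have hpre : 0 < preProc (step 1 aX) (ENNReal.toNNReal 1) ω := by
      rw [ENNReal.toNNReal_one, preProc_step]
      norm_num
    rw [if_pos ⟨ENNReal.one_lt_top, hpre⟩]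
  · rw [if_neg hb]
    simp

lemma jumpAtEta_X (t : ℝ≥0) (ω : Ω2) :
    jumpAtEta (step 1 aX) (step 1 aX) t ω
      = if (1:ℝ≥0) ≤ t then (if ω = bad then -1 else 0) else 0 := by
  unfold jumpAtEta
  rw [eta_eq]
  by_cases hb : ω = bad
  · rw [if_pos hb]
    have hcoe : ((1:ℝ≥0∞) ≤ (t : ℝ≥0∞)) ↔ (1:ℝ≥0) ≤ t := by exact_mod_cast Iff.rfl
    by_cases h : (1:ℝ≥0) ≤ t
    · rw [if_pos (hcoe.2 h), if_pos h, if_pos hb, ENNReal.toNNReal_one, jump_step, if_pos rfl,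
        hb, aX_bad]
    · rw [if_neg (fun hc => h (hcoe.1 hc)), if_neg h]
  · rw [if_neg hb]
    rw [if_neg (by rw [top_le_iff]; exact ENNReal.coe_ne_top)]
    simp [hb]

lemma jumpAtEta_Y (t : ℝ≥0) (ω : Ω2) :
    jumpAtEta (step 1 aX) (step 1 aY) t ω = 0 := by
  unfold jumpAtEta
  rw [eta_eq]
  by_cases hb : ω = bad
  · rw [if_pos hb]
    by_cases h : ((1:ℝ≥0∞) ≤ (t : ℝ≥0∞))
    · rw [if_pos h, ENNReal.toNNReal_one, jump_step, if_pos rfl, hb]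
      norm_num [aY, eF, xF, bad]
    · rw [if_neg h]
  · rw [if_neg hb, if_neg]
    rw [top_le_iff]
    exact ENNReal.coe_ne_top

lemma quadcov_step (μ : Measure Ω2) (k k' : ℝ) (a b : Ω2 → ℝ) :
    IsQuadCovar Filt μ (step k a) (step k' b) (step 0 (fun ω => a ω * b ω)) := by
  refine ⟨step_adapted _ _, ae_of_all _ fun ω => step_cadlag _ _ ω,
    ae_of_all _ fun ω => by simp [step], fun t => tendstoInMeasure_of_eq fun n ω => ?_⟩
  rw [dyadic_eq]
  simp only [step, cc]
  split_ifs <;> ring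

lemma isPathIntegral_jump (H : ℝ≥0 → ℝ) (hH : Measurable H) (q : ℝ) (hq : 0 ≤ q) :
    IsPathIntegral H (fun t => if (1:ℝ≥0) ≤ t then q else 0)
      (fun t => if (1:ℝ≥0) ≤ t then q * H 1 else 0) := by
  classical
  have hmem : ∀ t : ℝ≥0, ((1:ℝ≥0) ∈ Set.Ioc 0 t) ↔ (1:ℝ≥0) ≤ t := by
    intro t; simp [Set.mem_Ioc]
  have hdint : Integrable H (Measure.dirac (1:ℝ≥0)) := by
    refine ⟨hH.aestronglyMeasurable, ?_⟩
    simp only [HasFiniteIntegral, lintegral_dirac]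
    exact ENNReal.coe_lt_top
  refine ⟨ENNReal.ofReal q • Measure.dirac 1, 0, fun t => ⟨?_, by simp⟩, ?_, ?_, ?_⟩
  · rw [Measure.smul_apply, smul_eq_mul]
    exact ENNReal.mul_lt_top ENNReal.ofReal_lt_top (measure_lt_top _ _)
  · intro t
    rw [Measure.smul_apply, smul_eq_mul, Measure.dirac_apply]
    by_cases h : (1:ℝ≥0) ≤ t
    · rw [Set.indicator_of_mem ((hmem t).2 h)]
      simp [h, ENNReal.toReal_ofReal hq]
    · rw [Set.indicator_of_notMem (fun hc => h ((hmem t).1 hc))]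
      simp [h]
  · intro t
    constructor
    · show Integrable H ((ENNReal.ofReal q • Measure.dirac 1).restrict (Set.Ioc 0 t))
      rw [Measure.restrict_smul]
      exact (hdint.restrict).smul_measure ENNReal.ofReal_ne_top
    · show Integrable H ((0 : Measure ℝ≥0).restrict (Set.Ioc 0 t))
      rw [Measure.restrict_zero]
      exact integrable_zero_measure
  · intro t
    have h2 : (∫ s in Set.Ioc 0 t, H s ∂(0 : Measure ℝ≥0)) = 0 := by
      rw [Measure.restrict_zero, integral_zero_measure]
    have h1 : (∫ s in Set.Ioc 0 t, H s ∂(ENNReal.ofReal q • Measure.dirac 1))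
        = q * (if (1:ℝ≥0) ∈ Set.Ioc 0 t then H 1 else 0) := by
      rw [show ((ENNReal.ofReal q • Measure.dirac (1:ℝ≥0)).restrict (Set.Ioc 0 t))
          = ENNReal.ofReal q • ((Measure.dirac (1:ℝ≥0)).restrict (Set.Ioc 0 t))
        from Measure.restrict_smul _ _ _]
      rw [integral_smul_measure, setIntegral_dirac H 1 (Set.Ioc 0 t)]
      rw [ENNReal.toReal_ofReal hq, smul_eq_mul]
    rw [h1, h2, sub_zero]
    by_cases h : (1:ℝ≥0) ≤ t
    · simp only [if_pos ((hmem t).2 h), if_pos h]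
    · simp only [if_neg (fun hc => h ((hmem t).1 hc)), if_neg h, mul_zero]

lemma predSet_mem : MeasurableSet[predSigma Filt] {p : ℝ≥0 × Ω2 | (1:ℝ≥0) ≤ p.1} := by
  classical
  have hgen : ∀ (s t : ℝ≥0), MeasurableSet[predSigma Filt] (Set.Ioc s t ×ˢ (Set.univ : Set Ω2)) := by
    intro s t
    exact MeasurableSpace.measurableSet_generateFrom
      (Or.inl ⟨s, t, Set.univ, @MeasurableSet.univ _ (Filt s), rfl⟩)
  have hset : {p : ℝ≥0 × Ω2 | (1:ℝ≥0) ≤ p.1}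
      = ⋂ n : ℕ, ⋃ m : ℕ, (Set.Ioc (1 - 1/((n:ℝ≥0)+2)) (m : ℝ≥0) ×ˢ (Set.univ : Set Ω2)) := by
    ext p
    simp only [Set.mem_setOf_eq, Set.mem_iInter, Set.mem_iUnion, Set.mem_prod, Set.mem_univ,
      and_true, Set.mem_Ioc]
    constructor
    · intro h n
      obtain ⟨m, hm⟩ := exists_nat_ge p.1
      refine ⟨m, lt_of_lt_of_le ?_ h, hm⟩
      exact tsub_lt_self one_pos (by positivity)
    · intro h
      by_contra hc
      push_neg at hc
      have hpos : 0 < 1 - p.1 := tsub_pos_of_lt hc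
      obtain ⟨n, hn⟩ := exists_nat_one_div_lt hpos
      have hle : 1/((n:ℝ≥0)+2) ≤ 1 - p.1 := by
        refine le_trans (one_div_le_one_div_of_le ?_ ?_) hn.le
        · positivity
        · exact add_le_add_right one_le_two _
      have hplt : p.1 ≤ 1 - 1/((n:ℝ≥0)+2) := by
        have hc2 : 1/((n:ℝ≥0)+2) ≤ 1 := le_trans hle tsub_le_self
        rw [le_tsub_iff_right hc2]
        calc p.1 + 1/((n:ℝ≥0)+2) ≤ p.1 + (1 - p.1) := by gcongr
          _ = 1 := by rw [add_tsub_cancel_of_le hc.le]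
      obtain ⟨m, hm, -⟩ := h n
      exact absurd hm (not_lt.2 hplt)
  rw [hset]
  exact MeasurableSet.iInter fun n => MeasurableSet.iUnion fun m => hgen _ _

lemma pred_step (c : ℝ) :
    IsPredictableProc Filt (fun t (_ : Ω2) => if (1:ℝ≥0) ≤ t then c else 0) := by
  unfold IsPredictableProc
  have heq : (fun p : ℝ≥0 × Ω2 => if (1:ℝ≥0) ≤ p.1 then c else 0)
      = Set.indicator {p : ℝ≥0 × Ω2 | (1:ℝ≥0) ≤ p.1} (fun _ => c) := by
    funext p
    by_cases h : (1:ℝ≥0) ≤ p.1 <;> simp [Set.indicator, h]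
  show Measurable[predSigma Filt] fun p : ℝ≥0 × Ω2 => if (1:ℝ≥0) ≤ p.1 then c else 0
  rw [heq]
  letI : MeasurableSpace (ℝ≥0 × Ω2) := predSigma Filt
  exact measurable_const.indicator predSet_mem

lemma pred_zero : IsPredictableProc Filt (fun (_ : ℝ≥0) (_ : Ω2) => (0:ℝ)) :=
  @measurable_const ℝ (ℝ≥0 × Ω2) _ (predSigma Filt) 0

lemma measurable_invZ (ω : Ω2) : Measurable (fun s : ℝ≥0 => (step 1 aX s ω)⁻¹) := by
  apply Measurable.inv
  exact Measurable.add measurable_const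
    (Measurable.ite measurableSet_Ici measurable_const measurable_const)

lemma Zd_nonneg (ω : Ω2) : 0 ≤ 1 + aX ω := by
  rcases ω with ⟨a, b⟩
  cases a <;> cases b <;> norm_num [aX, eF, xF]

def Qm : Measure Ω2 := Pm.withDensity (fun ω => ENNReal.ofReal (1 + aX ω))

lemma Qm_absCont : Qm ≪ Pm := withDensity_absolutelyContinuous _ _

instance : IsProbabilityMeasure Qm := by
  constructor
  rw [Qm, withDensity_apply _ MeasurableSet.univ, Measure.restrict_univ, lintegral_fintype]
  rw [Fintype.sum_prod_type]
  simp only [Fintype.sum_bool, Pm_singleton, aX, eF, xF]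
  norm_num
  rw [show (2:ℝ≥0∞) * 4⁻¹ + (4⁻¹ + 4⁻¹) = 4 * 4⁻¹ by ring]
  exact ENNReal.mul_inv_cancel (by norm_num) (by norm_num)

lemma Qm_set (s : Set Ω2) : (Qm s).toReal = ∫ ω in s, (1 + aX ω) ∂Pm := by
  rw [Qm, withDensity_apply _ (measSet s)]
  rw [integral_eq_lintegral_of_nonneg_ae (ae_of_all _ fun ω => Zd_nonneg ω)
    ((measFun _).aestronglyMeasurable)]

lemma locAbsCont : LocAbsCont Filt Pm Qm := by
  intro t
  refine Measure.AbsolutelyContinuous.mk fun s hs hps => ?_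
  rw [trim_measurableSet_eq _ hs] at hps ⊢
  exact Qm_absCont hps

lemma isDensity : IsDensityProcess Filt Pm Qm (step 1 aX) := by
  refine ⟨step_martC 1 aX aX_int, ?_, ?_⟩
  · intro t ω
    simp only [step]
    split_ifs
    · exact Zd_nonneg ω
    · norm_num
  · intro t s hs
    by_cases h : (1:ℝ≥0) ≤ t
    · have hz : ∀ ω, step 1 aX t ω = 1 + aX ω := fun ω => by simp [step, h]
      rw [Qm_set]
      exact integral_congr_ae (ae_of_all _ fun ω => (hz ω).symm)
    · rw [Filt_lt (not_le.1 h)] at hs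
      rcases MeasurableSpace.measurableSet_bot_iff.1 hs with rfl | rfl
      · simp
      · rw [measure_univ, ENNReal.toReal_one, Measure.restrict_univ]
        have hz : ∀ ω, step 1 aX t ω = 1 := fun ω => by simp [step, h]
        simp only [hz]
        simp

lemma compX : IsCompensator Filt Pm (jumpAtEta (step 1 aX) (step 1 aX))
    (fun t (_ : Ω2) => if (1:ℝ≥0) ≤ t then -(1/4 : ℝ) else 0) := by
  refine ⟨pred_step _, by norm_num, ae_of_all _ fun ω => ?_, ae_of_all _ fun ω => ?_, ?_⟩
  · refine ⟨fun _ => 0, fun t => if (1:ℝ≥0) ≤ t then (1/4:ℝ) else 0, monotone_const, ?_, ?_⟩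
    · intro u v huv
      dsimp only
      split_ifs with h1 h2
      · exact le_rfl
      · exact absurd (h1.trans huv) h2
      · norm_num
      · exact le_rfl
    · intro u
      dsimp only
      split_ifs <;> norm_num
  · exact isCadlag_ite _ _
  · have he : (fun t ω => jumpAtEta (step 1 aX) (step 1 aX) t ω
        - (if (1:ℝ≥0) ≤ t then -(1/4 : ℝ) else 0))
        = step 0 (fun ω => (if ω = bad then (-1:ℝ) else 0) + 1/4) := by
      funext t ω
      rw [jumpAtEta_X]
      simp only [step]
      split_ifs <;> ring
    rw [he]
    refine martC_local (step_martC _ _ ?_)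
    rw [Pm_integral]
    norm_num [bad, Prod.ext_iff]

lemma compY : IsCompensator Filt Pm (jumpAtEta (step 1 aX) (step 1 aY))
    (fun (_ : ℝ≥0) (_ : Ω2) => (0:ℝ)) := by
  refine ⟨pred_zero, fun _ => rfl,
    ae_of_all _ fun ω => ⟨fun _ => 0, fun _ => 0, monotone_const, monotone_const, by simp⟩,
    ae_of_all _ fun ω => ⟨fun t => continuousWithinAt_const, fun t _ => ⟨0, tendsto_const_nhds⟩⟩,
    ?_⟩
  have he : (fun t ω => jumpAtEta (step 1 aX) (step 1 aY) t ω - 0)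
      = step 0 (fun _ => (0:ℝ)) := by
    funext t ω
    rw [jumpAtEta_Y]
    simp [step]
  rw [he]
  refine martC_local (step_martC _ _ ?_)
  rw [Pm_integral]
  norm_num

lemma intProc (q : Ω2 → ℝ) (hq : ∀ ω, 0 ≤ q ω) :
    IsIntegralProc Filt Qm (fun t ω => (step 1 aX t ω)⁻¹) (step 0 q)
      (step 0 (fun ω => q ω * (1 + aX ω)⁻¹)) := by
  refine ⟨step_adapted _ _, ae_of_all _ fun ω => ?_⟩
  have h := isPathIntegral_jump (fun s => (step 1 aX s ω)⁻¹) (measurable_invZ ω) (q ω) (hq ω)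
  have hA : (fun s => step 0 q s ω) = fun s => if (1:ℝ≥0) ≤ s then q ω else 0 := by
    funext s; simp [step]
  have hI : (fun s => step 0 (fun ω => q ω * (1 + aX ω)⁻¹) s ω)
      = fun s => if (1:ℝ≥0) ≤ s then q ω * (fun s => (step 1 aX s ω)⁻¹) 1 else 0 := by
    funext s; simp [step]
  rw [hA, hI]
  exact h

lemma lenX : IsLenglartTransform Filt Pm Qm (step 1 aX) (step 1 aX) (step 1 gX) := by
  refine ⟨step 0 qX, step 0 (fun ω => qX ω * (1 + aX ω)⁻¹),
    (fun t (_ : Ω2) => if (1:ℝ≥0) ≤ t then -(1/4 : ℝ) else 0),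
    quadcov_step Pm 1 1 aX aX, intProc qX (fun ω => mul_self_nonneg _), compX, ?_⟩
  intro t ω
  simp only [step, gX]
  split_ifs <;> ring

lemma aYaX_nonneg (ω : Ω2) : 0 ≤ aY ω * aX ω := by
  rw [mul_comm, aX_mul_aY]

lemma lenY : IsLenglartTransform Filt Pm Qm (step 1 aX) (step 1 aY) (step 1 aY) := by
  refine ⟨step 0 (fun ω => aY ω * aX ω), step 0 (fun ω => (aY ω * aX ω) * (1 + aX ω)⁻¹),
    (fun (_ : ℝ≥0) (_ : Ω2) => (0:ℝ)),
    quadcov_step Pm 1 1 aY aX, intProc _ aYaX_nonneg, compY, ?_⟩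
  intro t ω
  have h0 : aY ω * aX ω = 0 := by rw [mul_comm, aX_mul_aY]
  simp only [step, h0, zero_mul]
  split_ifs <;> ring

lemma XY_orth : ∀ C : ℝ≥0 → Ω2 → ℝ,
    IsQuadCovar Filt Pm (step 1 aX) (step 1 aY) C → ∀ᵐ ω ∂Pm, ∀ t, C t ω = 0 := by
  intro C hC
  refine ae_of_all _ fun ω => fun t => ?_
  by_contra hne
  have hεpos : (0:ℝ≥0∞) < ENNReal.ofReal |C t ω| := ENNReal.ofReal_pos.2 (abs_pos.2 hne)
  have hten := hC.2.2.2 t (ENNReal.ofReal |C t ω|) hεpos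
  have hcongr : (fun n => Pm {x | ENNReal.ofReal |C t ω| ≤
        edist (dyadicBracketSum (step 1 aX) (step 1 aY) t n x) (C t x)})
      = fun _ => Pm {x | |C t ω| ≤ |C t x|} := by
    funext n
    congr 1
    ext x
    rw [Set.mem_setOf_eq, Set.mem_setOf_eq, dyadic_eq, aX_mul_aY, zero_mul, edist_dist,
      ENNReal.ofReal_le_ofReal_iff dist_nonneg, dist_zero_left,
      Real.norm_eq_abs]
  rw [hcongr] at hten
  have hconst : Tendsto (fun _ : ℕ => Pm {x | |C t ω| ≤ |C t x|}) atTop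
      (𝓝 (Pm {x | |C t ω| ≤ |C t x|})) := tendsto_const_nhds
  have hzero : Pm {x | |C t ω| ≤ |C t x|} = 0 := tendsto_nhds_unique hconst hten
  have hmem : ω ∈ {x | |C t ω| ≤ |C t x|} := by
    simp only [Set.mem_setOf_eq]
    exact le_rfl
  have hle : Pm {ω} ≤ Pm {x | |C t ω| ≤ |C t x|} :=
    measure_mono (Set.singleton_subset_iff.2 hmem)
  rw [Pm_singleton, hzero] at hle
  simp at hle

lemma Pm_eF_one : (Pm {ω : Ω2 | eF ω = 1}).toReal = 1/2 := by
  have hset : {ω : Ω2 | eF ω = 1} = ({true} : Set Bool) ×ˢ (Set.univ : Set Bool) := by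
    ext ⟨a, b⟩
    cases a <;> simp [eF, Set.mem_prod] <;> norm_num
  rw [hset, Pm_prod, μB_singleton, measure_univ, mul_one]
  simp

lemma Pm_eF_zero : (Pm {ω : Ω2 | eF ω = 0}).toReal = 1/2 := by
  have hset : {ω : Ω2 | eF ω = 0} = ({false} : Set Bool) ×ˢ (Set.univ : Set Bool) := by
    ext ⟨a, b⟩
    cases a <;> simp [eF, Set.mem_prod] <;> norm_num
  rw [hset, Pm_prod, μB_singleton, measure_univ, mul_one]
  simp

lemma Pm_xF_one : (Pm {ω : Ω2 | xF ω = 1}).toReal = 1/2 := by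
  have hset : {ω : Ω2 | xF ω = 1} = (Set.univ : Set Bool) ×ˢ ({true} : Set Bool) := by
    ext ⟨a, b⟩
    cases b <;> simp [xF, Set.mem_prod] <;> norm_num
  rw [hset, Pm_prod, μB_singleton, measure_univ, one_mul]
  simp

lemma Pm_xF_negone : (Pm {ω : Ω2 | xF ω = -1}).toReal = 1/2 := by
  have hset : {ω : Ω2 | xF ω = -1} = (Set.univ : Set Bool) ×ˢ ({false} : Set Bool) := by
    ext ⟨a, b⟩
    cases b <;> simp [xF, Set.mem_prod] <;> norm_num
  rw [hset, Pm_prod, μB_singleton, measure_univ, one_mul]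
  simp

lemma indep_eF_xF : ProbabilityTheory.IndepFun eF xF Pm := by
  rw [ProbabilityTheory.indepFun_iff_measure_inter_preimage_eq_mul]
  intro A B _ _
  have h1 : eF ⁻¹' A = {a : Bool | (if a then (1:ℝ) else 0) ∈ A} ×ˢ (Set.univ : Set Bool) := by
    ext ⟨a, b⟩
    simp [eF, Set.mem_prod]
  have h2 : xF ⁻¹' B = (Set.univ : Set Bool) ×ˢ {b : Bool | (if b then (1:ℝ) else -1) ∈ B} := by
    ext ⟨a, b⟩
    simp [xF, Set.mem_prod]
  rw [h1, h2, Set.prod_inter_prod, Set.inter_univ, Set.univ_inter, Pm_prod, Pm_prod, Pm_prod,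
    measure_univ, mul_one, one_mul]

def ω0 : Ω2 := (false, true)

lemma Qm_ω0 : Qm {ω0} = 4⁻¹ := by
  rw [Qm, withDensity_apply _ (measSet _), lintegral_singleton]
  rw [Pm_singleton]
  norm_num [aX, eF, xF, ω0]

lemma notorth :
    ¬ ∀ᵐ ω ∂Qm, ∀ t, step 0 (fun ω => gX ω * aY ω) t ω = 0 := by
  intro hae
  rw [ae_iff] at hae
  have hmem : ω0 ∈ {ω | ¬ ∀ t, step 0 (fun ω => gX ω * aY ω) t ω = 0} := by
    simp only [Set.mem_setOf_eq, not_forall]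
    refine ⟨1, ?_⟩
    norm_num [step, gX, aY, aX, qX, eF, xF, ω0]
  have hle : Qm {ω0} ≤ Qm {ω | ¬ ∀ t, step 0 (fun ω => gX ω * aY ω) t ω = 0} :=
    measure_mono (Set.singleton_subset_iff.2 hmem)
  rw [Qm_ω0, hae] at hle
  simp at hle

end OrthoEx

/-- **Example: failure of strong orthogonality.** There exist a filtered
probability space, two `P`-martingales `X, Y` that are strongly orthogonal under `P`
(`[X,Y] ≡ 0`), and a probability `Q ≪ P` (with `dQ = X₁ dP`, built from independent
`ε ∼ Bernoulli(p)` and uniform `ξ ∈ {±1}` via `X = 1 + εξ 1_{[1,∞)}`,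
`Y = 1 + (1-ε)ξ 1_{[1,∞)}`) such that the Lenglart transformations `X̂, Ŷ` are *not*
strongly orthogonal under `Q`: `[X̂,Ŷ]` does not vanish `Q`-a.s. -/
theorem exists_strong_orthogonality_not_preserved :
    ∃ (Ω : Type) (m0 : MeasurableSpace Ω) (𝒻 : Filtration ℝ≥0 m0) (P Q : Measure Ω),
      IsProbabilityMeasure P ∧ IsProbabilityMeasure Q ∧
      ∃ Z X Y Xh Yh : ℝ≥0 → Ω → ℝ,
        RightContinuous 𝒻 ∧ Q ≪ P ∧ LocAbsCont 𝒻 P Q ∧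
        IsDensityProcess 𝒻 P Q Z ∧
        IsMartingaleC 𝒻 P X ∧ IsMartingaleC 𝒻 P Y ∧
        -- the concrete construction
        (∃ (ε ξ : Ω → ℝ) (p : ℝ), 0 < p ∧ p < 1 ∧
          (P {ω | ε ω = 1}).toReal = p ∧ (P {ω | ε ω = 0}).toReal = 1 - p ∧
          (P {ω | ξ ω = 1}).toReal = 1 / 2 ∧ (P {ω | ξ ω = -1}).toReal = 1 / 2 ∧
          ProbabilityTheory.IndepFun ε ξ P ∧
          (∀ t ω, X t ω = 1 + if (1 : ℝ≥0) ≤ t then ε ω * ξ ω else 0) ∧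
          (∀ t ω, Y t ω = 1 + if (1 : ℝ≥0) ≤ t then (1 - ε ω) * ξ ω else 0) ∧
          ∀ A : Set Ω, MeasurableSet A → (Q A).toReal = ∫ ω in A, X 1 ω ∂P) ∧
        -- X and Y are strongly orthogonal under P
        (∀ C : ℝ≥0 → Ω → ℝ, IsQuadCovar 𝒻 P X Y C → ∀ᵐ ω ∂P, ∀ t, C t ω = 0) ∧
        IsLenglartTransform 𝒻 P Q Z X Xh ∧
        IsLenglartTransform 𝒻 P Q Z Y Yh ∧
        -- but the Lenglart transformations are not strongly orthogonal under Q
        ∃ C : ℝ≥0 → Ω → ℝ,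
          IsQuadCovar 𝒻 Q Xh Yh C ∧ ¬ ∀ᵐ ω ∂Q, ∀ t, C t ω = 0 := by
  classical
  refine ⟨Ω2, inferInstance, Filt, Pm, Qm, inferInstance, inferInstance,
    step 1 aX, step 1 aX, step 1 aY, step 1 gX, step 1 aY,
    Filt_rightContinuous, Qm_absCont, locAbsCont, isDensity,
    step_martC 1 aX aX_int, step_martC 1 aY aY_int,
    ⟨eF, xF, 1/2, by norm_num, by norm_num, Pm_eF_one, by rw [Pm_eF_zero]; norm_num,
      Pm_xF_one, Pm_xF_negone, indep_eF_xF, fun t ω => rfl, fun t ω => rfl, ?_⟩,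
    XY_orth, lenX, lenY,
    step 0 (fun ω => gX ω * aY ω), quadcov_step Qm 1 1 gX aY, notorth⟩
  intro A hA
  rw [Qm_set]
  refine integral_congr_ae (ae_of_all _ fun ω => ?_)
  simp [step]

end MartingaleRep
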